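/- For every x ∈ ℝ^n, the gradient of the Gaussian smoothing approximates the true gradient: ‖∇h_μ(x) − ∇h(x)‖ ≤ (μ/2) L (n + 3)^{3/2}. -/

import Mathlib

/-!
Differentiating under the integral sign (legitimate because a Lipschitz derivative grows at most
linearly and a function with Lipschitz derivative at most quadratically, while the Gaussian has a
finite second moment) gives `∇h_μ(x) = E[∇h(x + μu)]`. Hence
`‖∇h_μ(x) - ∇h(x)‖ ≤ E‖∇h(x + μu) - ∇h(x)‖ ≤ L μ E‖u‖ ≤ L μ (1 + E‖u‖²) / 2 = L μ (n + 1) / 2`,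
which is at most `μ / 2 · L · (n + 3) ^ (3 / 2)`.
-/

open MeasureTheory ProbabilityTheory Real

noncomputable section

/-- `Vec n` is the Euclidean space `ℝ^n`. -/
abbrev Vec (n : ℕ) := EuclideanSpace ℝ (Fin n)

/-- The standard Gaussian measure on `ℝ^n` (mean zero, identity covariance). -/
def stdGaussian (n : ℕ) : Measure (Vec n) :=
  (Measure.pi fun _ : Fin n => gaussianReal 0 1).map (EuclideanSpace.equiv (Fin n) ℝ).symm

/-- Gaussian smooth approximation `h_μ(x) = E_u[h(x + μ u)]`. -/
def smooth {n : ℕ} (h : Vec n → ℝ) (μ : ℝ) (x : Vec n) : ℝ :=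
  ∫ u, h (x + μ • u) ∂(stdGaussian n)

lemma LipschitzWith.norm_le_add {E G : Type*} [SeminormedAddCommGroup E]
    [SeminormedAddCommGroup G] {g : E → G} {K : NNReal} (hg : LipschitzWith K g) (x y : E) :
    ‖g y‖ ≤ ‖g x‖ + K * ‖y - x‖ := by
  linarith [norm_le_insert' (g y) (g x), hg.norm_sub_le y x]

section LipschitzDerivative

variable {E G : Type*} [NormedAddCommGroup E] [NormedSpace ℝ E] [NormedAddCommGroup G]
  [NormedSpace ℝ G] {f : E → G} {K : NNReal}

lemma norm_sub_le_of_lipschitzWith_fderiv (hf : Differentiable ℝ f)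
    (hK : LipschitzWith K (fderiv ℝ f)) (x y : E) :
    ‖f y - f x‖ ≤ (‖fderiv ℝ f x‖ + K * ‖y - x‖) * ‖y - x‖ := by
  have hbound : ∀ z ∈ Metric.closedBall x ‖y - x‖,
      ‖fderiv ℝ f z‖ ≤ ‖fderiv ℝ f x‖ + K * ‖y - x‖ := fun z hz => by
    rw [Metric.mem_closedBall, dist_eq_norm] at hz
    linarith [hK.norm_le_add x z, mul_le_mul_of_nonneg_left hz K.coe_nonneg]
  simpa using (convex_closedBall x _).norm_image_sub_le_of_norm_fderiv_le
    (fun z _ => hf z) hbound (Metric.mem_closedBall_self (norm_nonneg _))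
    (by rw [Metric.mem_closedBall, dist_eq_norm])

end LipschitzDerivative

section SecondMoment

variable {E G : Type*} [NormedAddCommGroup E] [MeasurableSpace E] [NormedAddCommGroup G]
  {ν : Measure E} [IsFiniteMeasure ν]

lemma integrable_norm_of_memLp_two (hν : MemLp id 2 ν) : Integrable (fun u => ‖u‖) ν :=
  (memLp_one_iff_integrable.1 (hν.mono_exponent one_le_two)).norm

lemma integrable_of_norm_le_quadratic (hν : MemLp id 2 ν) {g : E → G}
    (hg : AEStronglyMeasurable g ν) (a b c : ℝ)
    (hbound : ∀ u, ‖g u‖ ≤ a + b * ‖u‖ + c * ‖u‖ ^ 2) : Integrable g ν :=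
  (((integrable_const a).add ((integrable_norm_of_memLp_two hν).const_mul b)).add
    ((hν.integrable_norm_pow' (p := 2)).const_mul c)).mono' hg (ae_of_all _ hbound)

end SecondMoment

section SmoothingAlongMeasure

variable {E G : Type*} [NormedAddCommGroup E] [NormedSpace ℝ E] [MeasurableSpace E]
  [BorelSpace E] [SecondCountableTopology E] [NormedAddCommGroup G] [NormedSpace ℝ G]
  {ν : Measure E} {f : E → G} {K : NNReal}

lemma integrable_fderiv_comp_add_smul [IsFiniteMeasure ν] (hν : MemLp id 2 ν)
    (hK : LipschitzWith K (fderiv ℝ f)) (μ : ℝ) (x : E) :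
    Integrable (fun u => fderiv ℝ f (x + μ • u)) ν := by
  refine integrable_of_norm_le_quadratic hν
    (hK.continuous.comp (by fun_prop)).aestronglyMeasurable ‖fderiv ℝ f x‖ (K * |μ|) 0
    fun u => ?_
  have := hK.norm_le_add x (x + μ • u)
  rw [add_sub_cancel_left, norm_smul, Real.norm_eq_abs] at this
  linarith

theorem hasFDerivAt_integral_comp_add_smul [IsFiniteMeasure ν] (hν : MemLp id 2 ν)
    (hf : Differentiable ℝ f) (hK : LipschitzWith K (fderiv ℝ f)) (μ : ℝ) (x₀ : E) :
    HasFDerivAt (fun x => ∫ u, f (x + μ • u) ∂ν) (∫ u, fderiv ℝ f (x₀ + μ • u) ∂ν) x₀ := by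
  have hf_comp : ∀ x, AEStronglyMeasurable (fun u => f (x + μ • u)) ν := fun x =>
    (hf.continuous.comp (by fun_prop)).aestronglyMeasurable
  have hf_int : Integrable (fun u => f (x₀ + μ • u)) ν := by
    refine integrable_of_norm_le_quadratic hν (hf_comp x₀) ‖f x₀‖ (‖fderiv ℝ f x₀‖ * |μ|)
      (K * μ ^ 2) fun u => ?_
    have := norm_sub_le_of_lipschitzWith_fderiv hf hK x₀ (x₀ + μ • u)
    rw [add_sub_cancel_left, norm_smul, Real.norm_eq_abs] at this
    have hexpand : (‖fderiv ℝ f x₀‖ + K * (|μ| * ‖u‖)) * (|μ| * ‖u‖)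
        = ‖fderiv ℝ f x₀‖ * |μ| * ‖u‖ + K * μ ^ 2 * ‖u‖ ^ 2 := by
      rw [← sq_abs μ]; ring
    linarith [norm_le_insert' (f (x₀ + μ • u)) (f x₀)]
  have hF'_bound : ∀ u, ∀ x ∈ Metric.ball x₀ 1,
      ‖fderiv ℝ f (x + μ • u)‖ ≤ ‖fderiv ℝ f x₀‖ + K + K * |μ| * ‖u‖ := fun u x hx => by
    have hdist : ‖x + μ • u - x₀‖ ≤ 1 + |μ| * ‖u‖ := by
      rw [Metric.mem_ball, dist_eq_norm] at hx
      rw [show x + μ • u - x₀ = (x - x₀) + μ • u by abel, ← Real.norm_eq_abs, ← norm_smul]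
      linarith [norm_add_le (x - x₀) (μ • u)]
    nlinarith [hK.norm_le_add x₀ (x + μ • u), mul_le_mul_of_nonneg_left hdist K.coe_nonneg]
  exact hasFDerivAt_integral_of_dominated_of_fderiv_le (Metric.ball_mem_nhds x₀ one_pos)
    (Filter.Eventually.of_forall hf_comp) hf_int
    (integrable_fderiv_comp_add_smul hν hK μ x₀).aestronglyMeasurable
    (ae_of_all _ hF'_bound)
    ((integrable_const _).add ((integrable_norm_of_memLp_two hν).const_mul _))
    (ae_of_all _ fun u x _ => (hf _).hasFDerivAt.comp x ((hasFDerivAt_id x).add_const _))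

theorem norm_integral_fderiv_comp_add_smul_sub_le [CompleteSpace G] [IsProbabilityMeasure ν]
    (hν : MemLp id 2 ν) (hK : LipschitzWith K (fderiv ℝ f)) (μ : ℝ) (x : E) :
    ‖(∫ u, fderiv ℝ f (x + μ • u) ∂ν) - fderiv ℝ f x‖ ≤ K * |μ| * ∫ u, ‖u‖ ∂ν := by
  calc ‖(∫ u, fderiv ℝ f (x + μ • u) ∂ν) - fderiv ℝ f x‖
      = ‖∫ u, (fderiv ℝ f (x + μ • u) - fderiv ℝ f x) ∂ν‖ := by
        rw [integral_sub (integrable_fderiv_comp_add_smul hν hK μ x) (integrable_const _),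
          integral_const, probReal_univ, one_smul]
    _ ≤ ∫ u, ‖fderiv ℝ f (x + μ • u) - fderiv ℝ f x‖ ∂ν := norm_integral_le_integral_norm _
    _ ≤ ∫ u, K * |μ| * ‖u‖ ∂ν := by
        refine integral_mono_of_nonneg (ae_of_all _ fun _ => norm_nonneg _)
          ((integrable_norm_of_memLp_two hν).const_mul _) (ae_of_all _ fun u => ?_)
        have := hK.norm_sub_le (x + μ • u) x
        rwa [add_sub_cancel_left, norm_smul, Real.norm_eq_abs, ← mul_assoc] at this
    _ = K * |μ| * ∫ u, ‖u‖ ∂ν := integral_const_mul _ _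

end SmoothingAlongMeasure

section Gradient

variable {E : Type*} [NormedAddCommGroup E] [InnerProductSpace ℝ E] [CompleteSpace E]

lemma lipschitzWith_fderiv_of_gradient {h : E → ℝ} {L : NNReal}
    (hL : LipschitzWith L (gradient h)) : LipschitzWith L (fderiv ℝ h) := by
  have hfderiv : fderiv ℝ h = InnerProductSpace.toDual ℝ E ∘ gradient h := by
    ext1 x
    exact ((InnerProductSpace.toDual ℝ E).apply_symm_apply _).symm
  rw [hfderiv, ← one_mul L]
  exact (InnerProductSpace.toDual ℝ E).lipschitz.comp hL

lemma norm_gradient_sub_gradient (f g : E → ℝ) (x : E) :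
    ‖gradient f x - gradient g x‖ = ‖fderiv ℝ f x - fderiv ℝ g x‖ := by
  rw [gradient, gradient, ← map_sub, LinearIsometryEquiv.norm_map]

end Gradient

lemma integral_sq_gaussianReal (v : NNReal) : ∫ t, t ^ 2 ∂gaussianReal 0 v = v := by
  have := variance_eq_integral (X := id) (μ := gaussianReal 0 v) measurable_id.aemeasurable
  simp only [variance_id_gaussianReal, id, integral_id_gaussianReal, sub_zero] at this
  exact this.symm

lemma stdGaussian_eq_stdGaussian (n : ℕ) :
    _root_.stdGaussian n = ProbabilityTheory.stdGaussian (Vec n) :=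
  map_pi_eq_stdGaussian

instance (n : ℕ) : IsProbabilityMeasure (_root_.stdGaussian n) := by
  rw [stdGaussian_eq_stdGaussian]
  infer_instance

lemma memLp_two_id_stdGaussian (n : ℕ) : MemLp id 2 (_root_.stdGaussian n) := by
  rw [stdGaussian_eq_stdGaussian]
  exact IsGaussian.memLp_two_id

lemma integral_norm_sq_stdGaussian (n : ℕ) : ∫ u, ‖u‖ ^ 2 ∂(_root_.stdGaussian n) = n := by
  rw [_root_.stdGaussian, integral_map (by fun_prop) (by fun_prop)]
  simp only [EuclideanSpace.real_norm_sq_eq]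
  change ∫ x : Fin n → ℝ, ∑ i, x i ^ 2 ∂_ = _
  have hcoord : ∀ i : Fin n, Integrable (fun x : Fin n → ℝ => x i ^ 2)
      (Measure.pi fun _ => gaussianReal 0 1) := fun i =>
    integrable_comp_eval (X := fun _ => ℝ) (f := fun t => t ^ 2)
      (memLp_id_gaussianReal' 2 (by norm_num)).integrable_sq
  rw [integral_finsetSum _ fun i _ => hcoord i]
  have hcoord_sq : ∀ i : Fin n, ∫ x : Fin n → ℝ, x i ^ 2 ∂(Measure.pi fun _ => gaussianReal 0 1)
      = 1 := fun i =>
    (integral_comp_eval (X := fun _ => ℝ) (f := fun t => t ^ 2) (by fun_prop)).trans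
      (integral_sq_gaussianReal 1)
  simp [hcoord_sq]

lemma integral_norm_stdGaussian_le (n : ℕ) :
    ∫ u, ‖u‖ ∂(_root_.stdGaussian n) ≤ (n + 1) / 2 := by
  have hν := memLp_two_id_stdGaussian n
  have hsq : Integrable (fun u : Vec n => ‖u‖ ^ 2) (_root_.stdGaussian n) :=
    hν.integrable_norm_pow' (p := 2)
  calc ∫ u, ‖u‖ ∂(_root_.stdGaussian n) ≤ ∫ u, (1 + ‖u‖ ^ 2) / 2 ∂(_root_.stdGaussian n) :=
        integral_mono (integrable_norm_of_memLp_two hν)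
          (((integrable_const 1).add hsq).div_const 2)
          fun u => by nlinarith [sq_nonneg (‖u‖ - 1)]
    _ = (n + 1) / 2 := by
        rw [integral_div, integral_add (integrable_const 1) hsq,
          integral_norm_sq_stdGaussian, integral_const, probReal_univ, one_smul, add_comm]

lemma add_one_le_rpow_three_halves {x : ℝ} (hx : 0 ≤ x) : x + 1 ≤ (x + 3) ^ ((3 : ℝ) / 2) := by
  linarith [Real.self_le_rpow_of_one_le (x := x + 3) (y := 3 / 2) (by linarith) (by norm_num)]

theorem statement15 {n : ℕ} (h : Vec n → ℝ) (hd : Differentiable ℝ h)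
    (L : NNReal) (hL : LipschitzWith L (gradient h)) (μ : ℝ) (hμ : 0 < μ) :
    ∀ x : Vec n,
      ‖gradient (smooth h μ) x - gradient h x‖ ≤
        μ / 2 * L * ((n : ℝ) + 3) ^ ((3 : ℝ) / 2) := by
  intro x
  have hK := lipschitzWith_fderiv_of_gradient hL
  have hν := memLp_two_id_stdGaussian n
  have hsmooth : HasFDerivAt (smooth h μ)
      (∫ u, fderiv ℝ h (x + μ • u) ∂(_root_.stdGaussian n)) x :=
    hasFDerivAt_integral_comp_add_smul hν hd hK μ x
  rw [norm_gradient_sub_gradient, hsmooth.fderiv]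
  calc _ ≤ L * |μ| * ∫ u, ‖u‖ ∂(_root_.stdGaussian n) :=
        norm_integral_fderiv_comp_add_smul_sub_le hν hK μ x
    _ ≤ L * μ * ((n + 1) / 2) := by
        rw [abs_of_pos hμ]
        gcongr
        exact integral_norm_stdGaussian_le n
    _ = μ / 2 * L * (n + 1) := by ring
    _ ≤ μ / 2 * L * ((n : ℝ) + 3) ^ ((3 : ℝ) / 2) := by
        gcongr
        exact add_one_le_rpow_three_halves n.cast_nonneg
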